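/- A nonzero vector v ∈ ℝ^4 is null for the Minkowski form (i.e. (v^0)^2 = (v^1)^2+(v^2)^2+(v^3)^2) if and only if its associated spinor matrix v^{AA'} can be written as λ·ρ ρ* for some nonzero ρ ∈ ℂ^2 and real number λ ≠ 0, where ρ ρ* denotes the outer product of ρ with its conjugate transpose. -/

import Mathlib

open Matrix Complex ComplexConjugate

/-- The spinor correspondence `v ↦ v^{AA'}`. -/
noncomputable def toSpinor (v : Fin 4 → ℝ) : Matrix (Fin 2) (Fin 2) ℂ :=
  (Real.sqrt 2 : ℂ)⁻¹ •
    !![(v 0 : ℂ) + (v 1 : ℂ), (v 2 : ℂ) + (v 3 : ℂ) * Complex.I;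
       (v 2 : ℂ) - (v 3 : ℂ) * Complex.I, (v 0 : ℂ) - (v 1 : ℂ)]

/-- A nonzero vector `v ∈ ℝ⁴` is Minkowski-null iff its spinor matrix factors as
`λ · ρ ρ*` for some nonzero spinor `ρ ∈ ℂ²` and nonzero real `λ`. -/
theorem null_iff_toSpinor_eq_outer (v : Fin 4 → ℝ) (hv : v ≠ 0) :
    (v 0) ^ 2 = (v 1) ^ 2 + (v 2) ^ 2 + (v 3) ^ 2 ↔
      ∃ (ρ : Fin 2 → ℂ) (l : ℝ), ρ ≠ 0 ∧ l ≠ 0 ∧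
        toSpinor v = Matrix.of fun A A' => (l : ℂ) * ρ A * conj (ρ A') := by
  have hs : (Real.sqrt 2 : ℝ) ≠ 0 := by positivity
  have hsC : (Real.sqrt 2 : ℂ) ≠ 0 := by exact_mod_cast hs
  have hsq : (Real.sqrt 2 : ℝ) * Real.sqrt 2 = 2 := by
    exact Real.mul_self_sqrt (by norm_num)
  constructor
  · intro hnull
    have key : (v 0 + v 1) * (v 0 - v 1) = v 2 ^ 2 + v 3 ^ 2 := by ring_nf; nlinarith [hnull]
    by_cases ha : v 0 + v 1 = 0
    · -- then v2 = v3 = 0, and v0 - v1 ≠ 0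
      have h0 : v 2 ^ 2 + v 3 ^ 2 = 0 := by rw [← key, ha]; ring
      have h2sq : v 2 ^ 2 = 0 := by nlinarith [sq_nonneg (v 3)]
      have h3sq : v 3 ^ 2 = 0 := by nlinarith [sq_nonneg (v 2)]
      have h23 : v 2 = 0 ∧ v 3 = 0 :=
        ⟨pow_eq_zero_iff (by norm_num) |>.mp h2sq, pow_eq_zero_iff (by norm_num) |>.mp h3sq⟩
      have hd : v 0 - v 1 ≠ 0 := by
        intro hd
        apply hv
        funext i
        fin_cases i <;> simp <;> [skip; skip; exact h23.1; exact h23.2] <;> linarith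
      refine ⟨![0, 1], (v 0 - v 1) / Real.sqrt 2, ?_, ?_, ?_⟩
      · intro h
        have := congrFun h 1
        simp at this
      · exact div_ne_zero hd hs
      · ext A A'
        fin_cases A <;> fin_cases A' <;>
          simp [toSpinor, h23.1, h23.2, show v 0 = -v 1 by linarith] <;>
          field_simp
    · refine ⟨![((v 0 + v 1 : ℝ) : ℂ), ((v 2 : ℝ) : ℂ) - (v 3 : ℝ) * Complex.I],
        ((v 0 + v 1) * Real.sqrt 2)⁻¹, ?_, ?_, ?_⟩
      · intro h
        have := congrFun h 0
        simp at this
        exact ha (by exact_mod_cast this)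
      · exact inv_ne_zero (mul_ne_zero ha hs)
      · have haC : ((v 0 + v 1 : ℝ) : ℂ) ≠ 0 := by exact_mod_cast ha
        have keyC : ((v 0 : ℂ) + v 1) * ((v 0 : ℂ) - v 1) = (v 2 : ℂ) ^ 2 + (v 3 : ℂ) ^ 2 := by
          exact_mod_cast congrArg (fun x : ℝ => (x : ℂ)) key
        have hsqC : (Real.sqrt 2 : ℂ) * (Real.sqrt 2 : ℂ) = 2 := by exact_mod_cast hsq
        have haC' : (v 0 : ℂ) + v 1 ≠ 0 := by push_cast at haC; exact haC
        ext A A'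
        fin_cases A <;> fin_cases A' <;> simp [toSpinor]
        · left; field_simp
        · left; field_simp
        · field_simp
        · field_simp
          linear_combination keyC + (v 3 : ℂ) ^ 2 * Complex.I_sq
  · rintro ⟨ρ, l, hρ, hl, hM⟩
    have key : toSpinor v 0 0 * toSpinor v 1 1 = toSpinor v 0 1 * toSpinor v 1 0 := by
      rw [hM]; simp; ring
    simp [toSpinor] at key
    have key2 : ((v 0 : ℂ) + v 1) * ((v 0 : ℂ) - v 1) =
        ((v 2 : ℂ) + v 3 * Complex.I) * ((v 2 : ℂ) - v 3 * Complex.I) := by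
      field_simp at key
      linear_combination key
    have key3 : ((v 0 ^ 2 - v 1 ^ 2 : ℝ) : ℂ) = ((v 2 ^ 2 + v 3 ^ 2 : ℝ) : ℂ) := by
      push_cast
      linear_combination key2 - (v 3 : ℂ)^2 * Complex.I_sq
    have : v 0 ^ 2 - v 1 ^ 2 = v 2 ^ 2 + v 3 ^ 2 := by exact_mod_cast key3
    linarith
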